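/- For ε > 0 let Ω_ε = {ξ ∈ ℝ³ : |ξ₃| < ε √(ξ₁² + ξ₂²)}. Let 0 < ε < 1 and let v ∈ L²(ℝ³;ℝ³) be such that ∫_{ℝ³} (2π|ξ|)^{−1} |v̂(ξ)|² dξ < ∞, ξ · v̂(ξ) = 0 for almost every ξ ∈ ℝ³, and v̂ = 0 almost everywhere on Ω_ε. Then ‖v‖_{Ḣ^{−1/2}} ≤ (√2/ε) ‖v_h‖_{Ḣ^{−1/2}}, where v_h = (v₁, v₂, 0). -/

import Mathlib

open MeasureTheory Real SchwartzMap
open scoped FourierTransform ENNReal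

noncomputable section

/-- Euclidean three-space. -/
abbrev E3 : Type := EuclideanSpace ℝ (Fin 3)

/-- The heat kernel `G(x,t) = (4πt)^{-3/2} exp(−|x|²/(4t))` on `ℝ³`. -/
def heatKernel (t : ℝ) (x : E3) : ℝ :=
  (4 * π * t) ^ (-(3 : ℝ) / 2) * Real.exp (-‖x‖ ^ 2 / (4 * t))

/-- The heat semigroup `e^{tΔ}f = G(·,t) * f` applied to a complex-valued function. -/
def heatC (t : ℝ) (f : E3 → ℂ) : E3 → ℂ :=
  fun x => ∫ y : E3, (heatKernel t (x - y) : ℂ) * f y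

/-- The heat semigroup `e^{tΔ}` applied componentwise to a vector field. -/
def heatV (t : ℝ) (v : Fin 3 → E3 → ℝ) : E3 → E3 :=
  fun x => (EuclideanSpace.equiv (Fin 3) ℝ).symm
    (fun i => ∫ y : E3, heatKernel t (x - y) * v i y)

/-- `F` is the (distributional/L²) Fourier transform of `f`: both are in `L²` and
`∫ F φ = ∫ f 𝓕φ` for every Schwartz function `φ` (multiplication formula), which
uniquely characterizes the Fourier transform of an `L²` function. -/
def HasFT (f F : E3 → ℂ) : Prop :=
  MemLp f 2 volume ∧ MemLp F 2 volume ∧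
    ∀ φ : 𝓢(E3, ℂ), ∫ ξ : E3, F ξ * φ ξ = ∫ x : E3, f x * 𝓕 (⇑φ) x

/-- The conical region `Ω_ε = {ξ ∈ ℝ³ : |ξ₃| < ε √(ξ₁² + ξ₂²)}`. -/
def Omega (ε : ℝ) : Set E3 :=
  {ξ : E3 | |ξ 2| < ε * Real.sqrt ((ξ 0) ^ 2 + (ξ 1) ^ 2)}

/-!
Outside the cone `Ω_ε` one has `ε |ξ_h| ≤ |ξ₃|`, while `ξ · v̂ = 0` and Cauchy–Schwarz give
`|ξ₃| |v̂₃| ≤ |ξ_h| |v̂_h|`. Hence `ε |v̂₃| ≤ |v̂_h|` pointwise (on the axis `ξ_h = 0` simply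
`v̂₃ = 0`), so `|v̂|² ≤ (1 + ε⁻²) |v̂_h|² ≤ 2 ε⁻² |v̂_h|²`; integrating against `(2π|ξ|)⁻¹`
and taking square roots gives the claim.
-/

theorem sqrt_integral_le_of_ae_le {α : Type*} [MeasurableSpace α] {μ : Measure α}
    {f g : α → ℝ} {c : ℝ} (hc : 0 ≤ c) (hf : Integrable f μ) (hg : Integrable g μ)
    (hfg : ∀ᵐ x ∂μ, f x ≤ c * g x) :
    √(∫ x, f x ∂μ) ≤ √c * √(∫ x, g x ∂μ) := by
  rw [← Real.sqrt_mul hc, ← integral_const_mul]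
  exact Real.sqrt_le_sqrt (integral_mono_ae hf (hg.const_mul c) hfg)

section Pointwise

variable {ξ : E3} {W : Fin 3 → ℂ}

theorem sq_mul_norm_sq_vertical_le (hdf : ∑ i, (ξ i : ℂ) * W i = 0) :
    ξ 2 ^ 2 * ‖W 2‖ ^ 2 ≤ (ξ 0 ^ 2 + ξ 1 ^ 2) * (‖W 0‖ ^ 2 + ‖W 1‖ ^ 2) := by
  rw [Fin.sum_univ_three] at hdf
  have hvert : |ξ 2| * ‖W 2‖ ≤ |ξ 0| * ‖W 0‖ + |ξ 1| * ‖W 1‖ := by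
    calc |ξ 2| * ‖W 2‖ = ‖(ξ 0 : ℂ) * W 0 + (ξ 1 : ℂ) * W 1‖ := by
          rw [eq_neg_of_add_eq_zero_left hdf, norm_neg, norm_mul, Complex.norm_real,
            Real.norm_eq_abs]
      _ ≤ |ξ 0| * ‖W 0‖ + |ξ 1| * ‖W 1‖ := by
          simpa only [norm_mul, Complex.norm_real, Real.norm_eq_abs] using
            norm_add_le ((ξ 0 : ℂ) * W 0) ((ξ 1 : ℂ) * W 1)
  -- Square `hvert`; the hint is Cauchy–Schwarz in `ℝ²` for its right-hand side.
  have hsq := pow_le_pow_left₀ (by positivity) hvert 2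
  nlinarith [sq_nonneg (|ξ 0| * ‖W 1‖ - |ξ 1| * ‖W 0‖), sq_abs (ξ 0), sq_abs (ξ 1), sq_abs (ξ 2)]

theorem sq_mul_norm_sq_vertical_le_of_notMem_omega {ε : ℝ} (hε0 : 0 < ε) (hξ : ξ ≠ 0)
    (hdf : ∑ i, (ξ i : ℂ) * W i = 0) (hΩ : ξ ∉ Omega ε) :
    ε ^ 2 * ‖W 2‖ ^ 2 ≤ ‖W 0‖ ^ 2 + ‖W 1‖ ^ 2 := by
  have hcone : ε ^ 2 * (ξ 0 ^ 2 + ξ 1 ^ 2) ≤ ξ 2 ^ 2 := by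
    have h := pow_le_pow_left₀ (by positivity) (not_lt.1 (show ¬ |ξ 2| < _ from hΩ)) 2
    rwa [mul_pow, Real.sq_sqrt (by positivity), sq_abs] at h
  have hvert := sq_mul_norm_sq_vertical_le hdf
  rcases (add_nonneg (sq_nonneg (ξ 0)) (sq_nonneg (ξ 1))).eq_or_lt with hh | hh
  · have h0 : ξ 0 = 0 := by nlinarith [sq_nonneg (ξ 0), sq_nonneg (ξ 1)]
    have h1 : ξ 1 = 0 := by nlinarith [sq_nonneg (ξ 0), sq_nonneg (ξ 1)]
    have h2 : ξ 2 ≠ 0 := fun h2 => hξ (by ext i; fin_cases i <;> assumption)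
    have hW2 : ‖W 2‖ ^ 2 = 0 := by
      rw [← hh] at hvert
      nlinarith [sq_pos_of_ne_zero h2, sq_nonneg ‖W 2‖]
    rw [hW2, mul_zero]
    positivity
  · nlinarith [mul_le_mul_of_nonneg_right hcone (sq_nonneg ‖W 2‖)]

theorem sum_norm_sq_le_of_divergence_free {ε : ℝ} (hε0 : 0 < ε) (hε1 : ε ≤ 1) (hξ : ξ ≠ 0)
    (hdf : ∑ i, (ξ i : ℂ) * W i = 0) (hsupp : ξ ∈ Omega ε → ∀ i, W i = 0) :
    ∑ i, ‖W i‖ ^ 2 ≤ 2 / ε ^ 2 * (‖W 0‖ ^ 2 + ‖W 1‖ ^ 2) := by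
  by_cases hΩ : ξ ∈ Omega ε
  · simp [hsupp hΩ]
  have hvert := sq_mul_norm_sq_vertical_le_of_notMem_omega hε0 hξ hdf hΩ
  have hε2 : ε ^ 2 ≤ 1 := pow_le_one₀ hε0.le hε1
  rw [Fin.sum_univ_three, div_mul_eq_mul_div, le_div_iff₀ (by positivity)]
  nlinarith [add_nonneg (sq_nonneg ‖W 0‖) (sq_nonneg ‖W 1‖)]

end Pointwise

theorem integrable_weight_mul_horizontal {V : Fin 3 → E3 → ℂ}
    (hV : ∀ i, AEStronglyMeasurable (V i))
    (hint : Integrable (fun ξ : E3 => (2 * π * ‖ξ‖) ^ (-(1 : ℝ)) * ∑ i, ‖V i ξ‖ ^ 2)) :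
    Integrable (fun ξ : E3 => (2 * π * ‖ξ‖) ^ (-(1 : ℝ)) * (‖V 0 ξ‖ ^ 2 + ‖V 1 ξ‖ ^ 2)) := by
  refine hint.mono' ?_ (Filter.Eventually.of_forall fun ξ => ?_)
  · have hw : Measurable fun ξ : E3 => (2 * π * ‖ξ‖) ^ (-(1 : ℝ)) := by fun_prop
    exact hw.aestronglyMeasurable.mul (((hV 0).norm.pow 2).add ((hV 1).norm.pow 2))
  · rw [Real.norm_of_nonneg (by positivity), Fin.sum_univ_three]
    exact mul_le_mul_of_nonneg_left (le_add_of_nonneg_right (sq_nonneg _)) (by positivity)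

/-- If `0 < ε < 1` and `v ∈ L²(ℝ³;ℝ³)` is divergence free, has finite `Ḣ^{−1/2}` norm
and its Fourier transform vanishes a.e. on `Ω_ε`, then
`‖v‖_{Ḣ^{−1/2}} ≤ (√2/ε)‖v_h‖_{Ḣ^{−1/2}}` where `v_h = (v₁,v₂,0)`. -/
theorem statement13 (ε : ℝ) (hε0 : 0 < ε) (hε1 : ε < 1)
    (v : Fin 3 → E3 → ℝ) (V : Fin 3 → E3 → ℂ)
    (hft : ∀ i, HasFT (fun x => (v i x : ℂ)) (V i))
    (hint : Integrable (fun ξ : E3 => (2 * π * ‖ξ‖) ^ (-(1 : ℝ)) * ∑ i, ‖V i ξ‖ ^ 2))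
    (hdf : ∀ᵐ ξ : E3, ∑ i, (ξ i : ℂ) * V i ξ = 0)
    (hsupp : ∀ᵐ ξ : E3, ξ ∈ Omega ε → ∀ i, V i ξ = 0) :
    Real.sqrt (∫ ξ : E3, (2 * π * ‖ξ‖) ^ (-(1 : ℝ)) * ∑ i, ‖V i ξ‖ ^ 2) ≤
      (Real.sqrt 2 / ε) *
        Real.sqrt (∫ ξ : E3, (2 * π * ‖ξ‖) ^ (-(1 : ℝ)) * (‖V 0 ξ‖ ^ 2 + ‖V 1 ξ‖ ^ 2)) := by
  have hne : ∀ᵐ ξ : E3, ξ ≠ 0 := compl_mem_ae_iff.2 (measure_singleton 0)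
  have hpt : ∀ᵐ ξ : E3, (2 * π * ‖ξ‖) ^ (-(1 : ℝ)) * ∑ i, ‖V i ξ‖ ^ 2 ≤
      2 / ε ^ 2 * ((2 * π * ‖ξ‖) ^ (-(1 : ℝ)) * (‖V 0 ξ‖ ^ 2 + ‖V 1 ξ‖ ^ 2)) := by
    filter_upwards [hdf, hsupp, hne] with ξ hdfξ hsuppξ hξ
    rw [mul_left_comm]
    exact mul_le_mul_of_nonneg_left
      (sum_norm_sq_le_of_divergence_free hε0 hε1.le hξ hdfξ hsuppξ) (by positivity)
  have hhor := integrable_weight_mul_horizontal (fun i => (hft i).2.1.aestronglyMeasurable) hint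
  calc _ ≤ √(2 / ε ^ 2) * _ := sqrt_integral_le_of_ae_le (by positivity) hint hhor hpt
    _ = _ := by rw [Real.sqrt_div' _ (sq_nonneg ε), Real.sqrt_sq hε0.le]
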